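/- arXiv:0809.0829 — 4 statements merged into one kernel-verified Lean document; each statement's English description precedes it below -/
import Mathlib

section
/- Let V be a finite-dimensional real vector space and let Δ ≤ Aff(V) be an affine crystallographic group. Then every finite normal subgroup of Δ is trivial. -/
noncomputable section

/-- The orbit equivalence relation on `V` induced by a subgroup `G` of affine
transformations of `V`. -/
def affOrbitSetoid {V : Type*} [NormedAddCommGroup V] [NormedSpace ℝ V]
    (G : Subgroup (V ≃ᵃ[ℝ] V)) : Setoid V where
  r x y := ∃ g ∈ G, g x = y
  iseqv := by
    refine ⟨fun x => ⟨1, G.one_mem, rfl⟩, ?_, ?_⟩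
    · rintro x y ⟨g, hg, rfl⟩
      exact ⟨g⁻¹, G.inv_mem hg, g.symm_apply_apply x⟩
    · rintro x y z ⟨g, hg, rfl⟩ ⟨k, hk, rfl⟩
      exact ⟨k * g, G.mul_mem hk hg, rfl⟩

/-- A subgroup `G ≤ Aff(V)` is properly discontinuous if for every compact `K ⊆ V`
the set of `g ∈ G` with `gK ∩ K ≠ ∅` is finite. -/
def ProperlyDiscontinuousAff {V : Type*} [NormedAddCommGroup V] [NormedSpace ℝ V]
    (G : Subgroup (V ≃ᵃ[ℝ] V)) : Prop :=
  ∀ K : Set V, IsCompact K → {g : V ≃ᵃ[ℝ] V | g ∈ G ∧ ((g '' K) ∩ K).Nonempty}.Finite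

/-- A subgroup `G ≤ Aff(V)` is an affine crystallographic group if it acts properly
discontinuously on `V` and the orbit space `G \ V` is compact. -/
def IsCrystallographic {V : Type*} [NormedAddCommGroup V] [NormedSpace ℝ V]
    (G : Subgroup (V ≃ᵃ[ℝ] V)) : Prop :=
  ProperlyDiscontinuousAff G ∧ CompactSpace (Quotient (affOrbitSetoid G))

section Aux

variable {V : Type*} [NormedAddCommGroup V] [NormedSpace ℝ V]

lemma affApply (f : V ≃ᵃ[ℝ] V) (x : V) : f x = f.linear x + f 0 := by
  have := f.map_vadd 0 x
  simpa using this

lemma affAvg (f : V ≃ᵃ[ℝ] V) (s : Finset (V ≃ᵃ[ℝ] V)) (hs : s.Nonempty) (y : (V ≃ᵃ[ℝ] V) → V) :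
    f ((s.card : ℝ)⁻¹ • ∑ n ∈ s, y n) = (s.card : ℝ)⁻¹ • ∑ n ∈ s, f (y n) := by
  have hk : (s.card : ℝ) ≠ 0 := by
    exact_mod_cast (Finset.card_pos.mpr hs).ne'
  have h2 : ∑ n ∈ s, f (y n) = (∑ n ∈ s, f.linear (y n)) + s.card • f 0 := by
    rw [Finset.sum_congr rfl (fun n _ => affApply f (y n)), Finset.sum_add_distrib,
      Finset.sum_const]
  rw [affApply f, h2, smul_add, map_smul, map_sum, ← Nat.cast_smul_eq_nsmul ℝ, smul_smul,
    inv_mul_cancel₀ hk, one_smul]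


lemma exists_cover [FiniteDimensional ℝ V] (Δ : Subgroup (V ≃ᵃ[ℝ] V))
    (hc : CompactSpace (Quotient (affOrbitSetoid Δ))) :
    ∃ R : ℝ, 0 < R ∧ ∀ x : V, ∃ g ∈ Δ, ∃ y : V, ‖y‖ ≤ R ∧ g y = x := by
  classical
  set q : V → Quotient (affOrbitSetoid Δ) := Quotient.mk (affOrbitSetoid Δ) with hq
  set U : ℕ → Set (Quotient (affOrbitSetoid Δ)) := fun n => q '' Metric.ball 0 n with hU
  have hopen : ∀ n, IsOpen (U n) := by
    intro n
    rw [← isQuotientMap_quotient_mk'.isOpen_preimage]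
    show IsOpen (q ⁻¹' (U n))
    have : q ⁻¹' (U n) = ⋃ g : ↥Δ, (fun x => ((g : V ≃ᵃ[ℝ] V)).symm x) ⁻¹' Metric.ball 0 n := by
      ext x
      simp only [Set.mem_preimage, Set.mem_image, Set.mem_iUnion]
      constructor
      · rintro ⟨b, hb, hbx⟩
        obtain ⟨g, hg, hgb⟩ := Quotient.exact hbx
        exact ⟨⟨g, hg⟩, by simpa [← hgb] using hb⟩
      · rintro ⟨g, hg⟩
        exact ⟨(g : V ≃ᵃ[ℝ] V).symm x, hg, Quotient.sound
          ⟨(g : V ≃ᵃ[ℝ] V), g.2, (g : V ≃ᵃ[ℝ] V).apply_symm_apply x⟩⟩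
    rw [this]
    exact isOpen_iUnion fun g =>
      ((g : V ≃ᵃ[ℝ] V).symm.toAffineMap.continuous_of_finiteDimensional).isOpen_preimage _
        Metric.isOpen_ball
  have hcover : Set.univ ⊆ ⋃ n, U n := by
    intro z _
    induction z using Quotient.ind with
    | _ x =>
      obtain ⟨n, hn⟩ := exists_nat_gt ‖x‖
      exact Set.mem_iUnion.mpr ⟨n, ⟨x, by simpa [Metric.mem_ball] using hn, rfl⟩⟩
  obtain ⟨t, ht⟩ := isCompact_univ.elim_finite_subcover U hopen hcover
  set M : ℕ := t.sup id with hM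
  refine ⟨(M : ℝ) + 1, by positivity, fun x => ?_⟩
  have : q x ∈ ⋃ n ∈ t, U n := ht (Set.mem_univ _)
  obtain ⟨n, hnt, y, hy, hyx⟩ := by simpa using this
  obtain ⟨g, hg, hgy⟩ := Quotient.exact hyx
  refine ⟨g, hg, y, ?_, hgy⟩
  have : (n : ℝ) ≤ M := by exact_mod_cast Finset.le_sup (f := id) hnt
  have h2 := mem_ball_zero_iff.mp hy
  linarith


end Aux

/-- Every finite normal subgroup of an affine crystallographic group is trivial. -/
theorem finite_normal_subgroup_of_crystallographic_eq_bot
    {V : Type*} [NormedAddCommGroup V] [NormedSpace ℝ V] [FiniteDimensional ℝ V]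
    (Δ : Subgroup (V ≃ᵃ[ℝ] V)) (hΔ : IsCrystallographic Δ)
    (N : Subgroup ↥Δ) (hN : N.Normal) (hfin : (N : Set ↥Δ).Finite) :
    N = ⊥ := by
  obtain ⟨hpd, hcq⟩ := hΔ
  classical
  rw [Subgroup.eq_bot_iff_forall]
  intro n₀ hn₀
  by_contra hne
  have hv : ∃ v : V, (n₀ : V ≃ᵃ[ℝ] V) v ≠ v := by
    by_contra h
    push_neg at h
    refine hne ?_
    have h1 : (n₀ : V ≃ᵃ[ℝ] V) = 1 := AffineEquiv.ext fun x => h x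
    exact_mod_cast h1
  obtain ⟨v, hv⟩ := hv
  set S : Set (V ≃ᵃ[ℝ] V) := (fun x : ↥Δ => (x : V ≃ᵃ[ℝ] V)) '' (N : Set ↥Δ) with hSdef
  have hSfin : S.Finite := hfin.image _
  set s : Finset (V ≃ᵃ[ℝ] V) := hSfin.toFinset with hsdef
  have hmem : ∀ {m : V ≃ᵃ[ℝ] V}, m ∈ s ↔ ∃ x : ↥Δ, x ∈ N ∧ (x : V ≃ᵃ[ℝ] V) = m := by
    intro m; simp [hsdef, hSdef]
  have h1s : (1 : V ≃ᵃ[ℝ] V) ∈ s := hmem.mpr ⟨1, N.one_mem, rfl⟩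
  have hs : s.Nonempty := ⟨1, h1s⟩
  have hk : (s.card : ℝ) ≠ 0 := by exact_mod_cast (Finset.card_pos.mpr hs).ne'
  have hn₀s : (n₀ : V ≃ᵃ[ℝ] V) ∈ s := hmem.mpr ⟨n₀, hn₀, rfl⟩
  have hmul : ∀ {m n : V ≃ᵃ[ℝ] V}, m ∈ s → n ∈ s → m * n ∈ s := by
    intro m n hm hn
    obtain ⟨x, hx, rfl⟩ := hmem.mp hm; obtain ⟨y, hy, rfl⟩ := hmem.mp hn
    exact hmem.mpr ⟨x * y, N.mul_mem hx hy, rfl⟩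
  have hinv : ∀ {m : V ≃ᵃ[ℝ] V}, m ∈ s → m⁻¹ ∈ s := by
    intro m hm
    obtain ⟨x, hx, rfl⟩ := hmem.mp hm
    exact hmem.mpr ⟨x⁻¹, N.inv_mem hx, rfl⟩
  have hconj : ∀ (g : ↥Δ) {n : V ≃ᵃ[ℝ] V}, n ∈ s →
      (g : V ≃ᵃ[ℝ] V) * n * (g : V ≃ᵃ[ℝ] V)⁻¹ ∈ s := by
    intro g n hn
    obtain ⟨x, hx, rfl⟩ := hmem.mp hn
    exact hmem.mpr ⟨g * x * g⁻¹, hN.conj_mem x hx g, by push_cast; rfl⟩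
  set c : ℝ := (s.card : ℝ)⁻¹ with hc
  set P : V → V := fun x => c • ∑ n ∈ s, n x with hP
  have hfP : ∀ (f : V ≃ᵃ[ℝ] V) (x : V), f (P x) = c • ∑ n ∈ s, f (n x) :=
    fun f x => affAvg f s hs _
  have hfix : ∀ {m : V ≃ᵃ[ℝ] V}, m ∈ s → ∀ x, m (P x) = P x := by
    intro m hm x
    rw [hfP]
    have : ∑ n ∈ s, m (n x) = ∑ n ∈ s, n x := by
      refine Finset.sum_equiv (Equiv.mulLeft m) (fun n => ?_) (fun n hn => ?_)
      · constructor
        · intro hn; exact hmul hm hn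
        · intro hn
          have := hmul (hinv hm) hn
          simpa [← mul_assoc] using this
      · simp [AffineEquiv.coe_mul]
    rw [this]
  have hequiv : ∀ (g : ↥Δ) (x : V), (g : V ≃ᵃ[ℝ] V) (P x) = P ((g : V ≃ᵃ[ℝ] V) x) := by
    intro g x
    rw [hfP]
    show _ = c • ∑ n ∈ s, n ((g : V ≃ᵃ[ℝ] V) x)
    congr 1
    refine Finset.sum_equiv
      ((Equiv.mulRight ((g : V ≃ᵃ[ℝ] V))⁻¹).trans (Equiv.mulLeft (g : V ≃ᵃ[ℝ] V)))
      (fun n => ?_) (fun n hn => ?_)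
    · simp only [Equiv.trans_apply, Equiv.coe_mulRight, Equiv.coe_mulLeft]
      constructor
      · intro hn
        have := hconj g hn
        simpa [mul_assoc] using this
      · intro hn
        have := hconj g⁻¹ hn
        simpa [mul_assoc] using this
    · simp only [Equiv.trans_apply, Equiv.coe_mulRight, Equiv.coe_mulLeft]
      simp [AffineEquiv.coe_mul, AffineEquiv.inv_def]
  have hsumv : ∀ x : V, ∑ n ∈ s, n x = (s.card : ℝ) • P x := by
    intro x
    rw [hP]
    show _ = (s.card : ℝ) • (c • _)
    rw [smul_smul, hc, mul_inv_cancel₀ hk, one_smul]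
  have hd : v - P v ≠ 0 := by
    intro h0
    rw [sub_eq_zero] at h0
    exact hv (by rw [h0, hfix hn₀s])
  have hline : ∀ t : ℝ, P (P v + t • (v - P v)) = P v := by
    intro t
    have hterm : ∀ n ∈ s, n (P v + t • (v - P v)) = t • (n v - P v) + P v := by
      intro n hn
      have h1 : P v + t • (v - P v) = t • (v - P v) +ᵥ P v := by
        rw [vadd_eq_add, add_comm]
      rw [h1, AffineEquiv.map_vadd, map_smul]
      have h2 : n.linear (v - P v) = n v - n (P v) := by
        rw [map_sub, affApply n v, affApply n (P v)]; abel
      rw [h2, hfix hn, vadd_eq_add]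
    have hsum : ∑ n ∈ s, n (P v + t • (v - P v))
        = t • (∑ n ∈ s, n v) + (s.card : ℝ) • P v - (t * (s.card : ℝ)) • P v := by
      rw [Finset.sum_congr rfl hterm, Finset.sum_add_distrib, ← Finset.smul_sum,
        Finset.sum_sub_distrib, Finset.sum_const,
        ← Nat.cast_smul_eq_nsmul ℝ s.card (P v)]
      module
    rw [hsumv v] at hsum
    have hsum2 : ∑ n ∈ s, n (P v + t • (v - P v)) = (s.card : ℝ) • P v := by
      rw [hsum]; module
    show c • ∑ n ∈ s, n (P v + t • (v - P v)) = P v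
    rw [hsum2, smul_smul, hc, inv_mul_cancel₀ hk, one_smul]
  obtain ⟨R, hR, hcov⟩ := exists_cover Δ hcq
  have hch : ∀ t : ℕ, ∃ g : ↥Δ, ∃ y : V,
      ‖y‖ ≤ R ∧ (g : V ≃ᵃ[ℝ] V) y = P v + (t : ℝ) • (v - P v) := by
    intro t
    obtain ⟨g, hg, y, hy, hgy⟩ := hcov (P v + (t : ℝ) • (v - P v))
    exact ⟨⟨g, hg⟩, y, hy, hgy⟩
  choose g y hynorm hgy using hch
  have hPcont : Continuous P := by
    apply Continuous.const_smul
    exact continuous_finset_sum _ fun n _ => n.toAffineMap.continuous_of_finiteDimensional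
  set K : Set V := Metric.closedBall 0 R with hK
  have hKcp : IsCompact K := isCompact_closedBall 0 R
  set K' : Set V := K ∪ (P '' K ∪ {P v}) with hK'
  have hK'cp : IsCompact K' := hKcp.union ((hKcp.image hPcont).union isCompact_singleton)
  have hfinS := hpd K' hK'cp
  haveI := hfinS.to_subtype
  have key : ∀ t : ℕ, ((g t : V ≃ᵃ[ℝ] V)).symm (P v) = P (y t) := by
    intro t
    have h1 : P (P v + (t : ℝ) • (v - P v)) = P v := hline t
    rw [← hgy t, ← hequiv (g t) (y t)] at h1
    rw [← h1, AffineEquiv.symm_apply_apply]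
  have hyK : ∀ t : ℕ, y t ∈ K := fun t => by
    simpa [hK, Metric.mem_closedBall, dist_zero_right] using hynorm t
  set F : ℕ → ↥{h : V ≃ᵃ[ℝ] V | h ∈ Δ ∧ ((h '' K') ∩ K').Nonempty} := fun t =>
    ⟨((g t)⁻¹ : ↥Δ), ((g t)⁻¹ : ↥Δ).2, P (y t),
      ⟨P v, Or.inr (Or.inr rfl), by
        show (((g t)⁻¹ : ↥Δ) : V ≃ᵃ[ℝ] V) (P v) = P (y t)
        rw [show (((g t)⁻¹ : ↥Δ) : V ≃ᵃ[ℝ] V) = ((g t : V ≃ᵃ[ℝ] V))⁻¹ from rfl,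
          AffineEquiv.inv_def]
        exact key t⟩,
      Or.inr (Or.inl ⟨y t, hyK t, rfl⟩)⟩ with hF
  obtain ⟨G₀, hfib⟩ := Finite.exists_infinite_fiber F
  have hfib' : (F ⁻¹' {G₀} : Set ℕ).Infinite := Set.infinite_coe_iff.mp hfib
  set gg : V ≃ᵃ[ℝ] V := (G₀ : V ≃ᵃ[ℝ] V) with hgg
  have hLd : gg.linear (v - P v) ≠ 0 := by
    intro h
    exact hd (by simpa using (gg.linear.map_eq_zero_iff).mp h)
  have hLdpos : 0 < ‖gg.linear (v - P v)‖ := norm_pos_iff.mpr hLd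
  obtain ⟨n₁, hn₁⟩ := exists_nat_gt ((R + ‖gg (P v)‖) / ‖gg.linear (v - P v)‖)
  obtain ⟨t, htfib, htgt⟩ := hfib'.exists_gt n₁
  have hFt : (((g t)⁻¹ : ↥Δ) : V ≃ᵃ[ℝ] V) = gg := by
    have : F t = G₀ := htfib
    exact congrArg Subtype.val this
  have hgx : gg (P v + (t : ℝ) • (v - P v)) = y t := by
    rw [← hFt, show (((g t)⁻¹ : ↥Δ) : V ≃ᵃ[ℝ] V) = ((g t : V ≃ᵃ[ℝ] V))⁻¹ from rfl,
      AffineEquiv.inv_def, ← hgy t, AffineEquiv.symm_apply_apply]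
  have hexp : gg (P v + (t : ℝ) • (v - P v))
      = (t : ℝ) • gg.linear (v - P v) + gg (P v) := by
    rw [show P v + (t : ℝ) • (v - P v) = (t : ℝ) • (v - P v) +ᵥ P v from by
      rw [vadd_eq_add, add_comm], AffineEquiv.map_vadd, map_smul, vadd_eq_add]
  have hnorm1 : ‖(t : ℝ) • gg.linear (v - P v) + gg (P v)‖ ≤ R := by
    rw [← hexp] at *
    rw [hgx]
    exact hynorm t
  have htri : ‖(t : ℝ) • gg.linear (v - P v)‖
      ≤ ‖(t : ℝ) • gg.linear (v - P v) + gg (P v)‖ + ‖gg (P v)‖ := by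
    have := norm_add_le ((t : ℝ) • gg.linear (v - P v) + gg (P v)) (-(gg (P v)))
    simpa using this
  have hmain : (t : ℝ) * ‖gg.linear (v - P v)‖ ≤ R + ‖gg (P v)‖ := by
    have h5 : ‖(t : ℝ) • gg.linear (v - P v)‖ = (t : ℝ) * ‖gg.linear (v - P v)‖ := by
      rw [norm_smul, Real.norm_natCast]
    linarith [htri, hnorm1, h5.symm.le]
  have hlt : (t : ℝ) ≤ (R + ‖gg (P v)‖) / ‖gg.linear (v - P v)‖ := by
    rw [le_div_iff₀ hLdpos]
    exact hmain
  have : (t : ℝ) < (t : ℝ) :=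
    lt_of_le_of_lt hlt (hn₁.trans (by exact_mod_cast htgt))
  exact absurd this (lt_irrefl _)


end
end

section
/- Let V be a finite-dimensional real vector space, Γ a nilpotent group generated by a set S, and ρ : Γ → Aff(V) a homomorphism such that ρ(s) is unipotent for every s ∈ S. Then ρ(γ) is unipotent for every γ ∈ Γ. Consequently, if Γ is generated by finitely many elements γ_1, …, γ_m, then Hom_u(Γ, Aff(V)) is the intersection of Hom(Γ, Aff(V)) ⊆ Aff(V)^m with the common zero set of finitely many polynomials with rational coefficients in the matrix entries, namely the entries of the equations (ρ(γ_i) − id)^{dim V + 1} = 0 in GL(V ⊕ ℝ). -/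
/-!
Through `affToLin`, `ρ` becomes a linear representation on `V × ℝ`, and the first claim holds
for any finite-dimensional representation of a nilpotent group over a field, by induction on the
dimension. If `ρ` has a proper nonzero subrepresentation, an endomorphism that is unipotent on it
and on the quotient is unipotent, and induction applies to both. If `ρ` is irreducible, Schur's
lemma forces a nilpotent endomorphism commuting with `ρ` to vanish. Let `ρ x` be unipotent; by
induction on `i`, `ρ ⁅x, g⁆ = 1` whenever `⁅x, g⁆` lies in the `i`-th term of the upper central
series: `ρ x` commutes with `ρ ⁅x, g⁆`, so `ρ ⁅x, g⁆ = ρ x * ρ (g * x⁻¹ * g⁻¹)` is a product of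
commuting unipotents, and it commutes with every `ρ h`, so it is `1` by Schur. Hence `ρ x` is
central, hence `1`, so `ρ` kills the generators and is trivial. The polynomial equations come from
Cayley–Hamilton: a nilpotent endomorphism of `V × ℝ` vanishes in degree `dim V + 1`.
-/

noncomputable section

/-- The image of an affine transformation `g : v ↦ Av + b` of `V` in `GL(V ⊕ ℝ)`,
as the linear endomorphism `(v, t) ↦ (Av + t • b, t)` of `V × ℝ`, corresponding to the
block matrix `(A b; 0 1)`. -/
def affToLin {V : Type*} [NormedAddCommGroup V] [NormedSpace ℝ V]
    (g : V ≃ᵃ[ℝ] V) : Module.End ℝ (V × ℝ) :=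
  LinearMap.prod
    (((g.linear : V →ₗ[ℝ] V).comp (LinearMap.fst ℝ V ℝ)) +
      ((LinearMap.toSpanSingleton ℝ V (g 0)).comp (LinearMap.snd ℝ V ℝ)))
    (LinearMap.snd ℝ V ℝ)

/-- An affine transformation is unipotent if its image in `GL(V ⊕ ℝ)` is the identity
plus a nilpotent endomorphism. -/
def IsUnipotentAff {V : Type*} [NormedAddCommGroup V] [NormedSpace ℝ V]
    (g : V ≃ᵃ[ℝ] V) : Prop :=
  IsNilpotent (affToLin g - 1)

open scoped commutatorElement

def IsUnipotent {R : Type*} [Ring R] (u : R) : Prop := IsNilpotent (u - 1)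

namespace IsUnipotent

variable {R : Type*} [Ring R]

theorem one : IsUnipotent (1 : R) := ⟨1, by simp⟩

theorem _root_.Commute.isUnipotent_mul {u v : R} (h : Commute u v) (hu : IsUnipotent u)
    (hv : IsUnipotent v) : IsUnipotent (u * v) := by
  have hu' : Commute (u - 1) v := h.sub_left (Commute.one_left v)
  have hsum : u * v - 1 = (u - 1) * v + (v - 1) := by noncomm_ring
  unfold IsUnipotent
  rw [hsum]
  exact ((hu'.sub_right (Commute.one_right _)).mul_left
    ((Commute.refl v).sub_right (Commute.one_right v))).isNilpotent_add
    (hu'.isNilpotent_mul_right hu) hv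

variable {G : Type*} [Group G] (π : G →* R)

theorem map_inv {x : G} (hx : IsUnipotent (π x)) : IsUnipotent (π x⁻¹) := by
  have hcomm : Commute (π x⁻¹) (π x - 1) :=
    ((Commute.refl x).inv_left.map π).sub_right (Commute.one_right _)
  have h : π x⁻¹ - 1 = -(π x⁻¹ * (π x - 1)) := by
    rw [mul_sub, ← map_mul, inv_mul_cancel, map_one, mul_one, neg_sub]
  unfold IsUnipotent
  rw [h]
  exact (hcomm.isNilpotent_mul_left hx).neg

theorem map_conj (g : G) {x : G} (hx : IsUnipotent (π x)) : IsUnipotent (π (g * x * g⁻¹)) := by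
  obtain ⟨n, hn⟩ := hx
  refine ⟨n, ?_⟩
  have h : π (g * x * g⁻¹) - 1 = π.toHomUnits g * (π x - 1) * ↑(π.toHomUnits g)⁻¹ := by
    simp [mul_sub, sub_mul, ← map_mul, ← _root_.map_inv]
  rw [h, Units.conj_pow, hn, mul_zero, zero_mul]

theorem map_commutatorElement {x : G} (g : G) (hx : IsUnipotent (π x))
    (hcomm : Commute (π x) (π ⁅x, g⁆)) : IsUnipotent (π ⁅x, g⁆) := by
  have hdecomp : ⁅x, g⁆ = x * (g * x⁻¹ * g⁻¹) := by group
  have hcomm' : Commute (π x) (π (g * x⁻¹ * g⁻¹)) := by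
    have : π (g * x⁻¹ * g⁻¹) = π x⁻¹ * π ⁅x, g⁆ := by rw [← map_mul, hdecomp]; group
    rw [this]
    exact ((Commute.refl x).inv_right.map π).mul_right hcomm
  rw [hdecomp, map_mul]
  exact hcomm'.isUnipotent_mul hx (map_conj π g (map_inv π hx))

end IsUnipotent

theorem MonoidHom.commute_of_map_commutatorElement_eq_one {G M : Type*} [Group G] [Monoid M]
    (π : G →* M) {x g : G} (h : π ⁅x, g⁆ = 1) : Commute (π x) (π g) := by
  have : x * g = ⁅x, g⁆ * (g * x) := by group
  rw [Commute, SemiconjBy, ← map_mul, ← map_mul, this, map_mul, h, one_mul]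

namespace Module.End

variable {R M : Type*} [Ring R] [AddCommGroup M] [Module R M] {f : End R M} {p : Submodule R M}

theorem isNilpotent_of_restrict_of_mapQ (hp : p ≤ p.comap f) (h₁ : IsNilpotent (f.restrict hp))
    (h₂ : IsNilpotent (p.mapQ p f hp)) : IsNilpotent f := by
  obtain ⟨a, ha⟩ := h₁
  obtain ⟨b, hb⟩ := h₂
  refine ⟨a + b, LinearMap.ext fun x => ?_⟩
  have hx : (f ^ b) x ∈ p := by
    have := LinearMap.congr_fun hb (Submodule.Quotient.mk x)
    rwa [← Submodule.mapQ_pow, Submodule.mapQ_apply, LinearMap.zero_apply,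
      Submodule.Quotient.mk_eq_zero] at this
  have := congr_arg Subtype.val (LinearMap.congr_fun ha ⟨_, hx⟩)
  rw [pow_restrict] at this
  simpa [pow_add] using this

theorem sub_one_le_comap (hp : p ≤ p.comap f) : p ≤ p.comap (f - 1) :=
  fun _ hx => p.sub_mem (hp hx) hx

theorem restrict_sub_one (hp : p ≤ p.comap f) :
    (f - 1).restrict (sub_one_le_comap hp) = f.restrict hp - 1 := by
  ext; simp

theorem mapQ_sub_one (hp : p ≤ p.comap f) :
    p.mapQ p (f - 1) (sub_one_le_comap hp) = p.mapQ p f hp - 1 := by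
  ext; simp

theorem _root_.IsUnipotent.restrict (hf : IsUnipotent f) (hp : p ≤ p.comap f) :
    IsUnipotent (f.restrict hp) := by
  rw [IsUnipotent, ← restrict_sub_one hp]
  exact isNilpotent.restrict (sub_one_le_comap hp) hf

theorem _root_.IsUnipotent.mapQ (hf : IsUnipotent f) (hp : p ≤ p.comap f) :
    IsUnipotent (p.mapQ p f hp) := by
  rw [IsUnipotent, ← mapQ_sub_one hp]
  exact IsNilpotent.mapQ (sub_one_le_comap hp) hf

theorem isUnipotent_of_restrict_of_mapQ (hp : p ≤ p.comap f) (h₁ : IsUnipotent (f.restrict hp))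
    (h₂ : IsUnipotent (p.mapQ p f hp)) : IsUnipotent f := by
  rw [IsUnipotent, ← restrict_sub_one hp] at h₁
  rw [IsUnipotent, ← mapQ_sub_one hp] at h₂
  exact isNilpotent_of_restrict_of_mapQ (sub_one_le_comap hp) h₁ h₂

end Module.End

theorem IsNilpotent.pow_finrank_eq_zero {k W : Type*} [Field k] [AddCommGroup W] [Module k W]
    [FiniteDimensional k W] {φ : Module.End k W} (h : IsNilpotent φ) :
    φ ^ Module.finrank k W = 0 := by
  simpa [h.charpoly_eq_X_pow_finrank] using φ.aeval_self_charpoly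

namespace Representation

variable {k G W : Type*} [Field k] [AddCommGroup W] [Module k W]

section Monoid

variable [Monoid G] {ρ : Representation k G W}

theorem IsIrreducible.eq_zero_of_isNilpotent [ρ.IsIrreducible] {e : Module.End k W}
    (he : IsNilpotent e) (hcomm : ∀ g, Commute e (ρ g)) : e = 0 := by
  let f : IntertwiningMap ρ ρ :=
    e.intertwiningMap_of_isIntertwiningMap ρ ρ fun g v => LinearMap.congr_fun (hcomm g) v
  rcases IsIrreducible.injective_or_eq_zero f with hinj | hzero
  · obtain ⟨n, hn⟩ := he
    have hfn : (⇑f)^[n] = ⇑(e ^ n) := (Module.End.coe_pow e n).symm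
    have : Subsingleton W := ⟨fun x y => hinj.iterate n (by rw [hfn, hn]; rfl)⟩
    exact Subsingleton.elim _ _
  · exact congr_arg IntertwiningMap.toLinearMap hzero

theorem IsIrreducible.eq_one_of_isUnipotent [ρ.IsIrreducible] {u : Module.End k W}
    (hu : IsUnipotent u) (hcomm : ∀ g, Commute u (ρ g)) : u = 1 :=
  sub_eq_zero.1 (eq_zero_of_isNilpotent hu fun g => (hcomm g).sub_left (Commute.one_left _))

theorem exists_ne_bot_ne_top_of_not_isIrreducible [Nontrivial W] (h : ¬ρ.IsIrreducible) :
    ∃ p : Subrepresentation ρ, p ≠ ⊥ ∧ p ≠ ⊤ := by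
  have : Nontrivial (Subrepresentation ρ) :=
    ⟨⊥, ⊤, fun h => bot_ne_top (congr_arg Subrepresentation.toSubmodule h)⟩
  by_contra! hp
  exact h { eq_bot_or_eq_top := fun p => or_iff_not_imp_left.2 (hp p) }

theorem _root_.Subrepresentation.le_comap (p : Subrepresentation ρ) (g : G) :
    p.toSubmodule ≤ p.toSubmodule.comap (ρ g) :=
  fun _ hv => p.apply_mem_toSubmodule g hv

def _root_.Subrepresentation.quotient (p : Subrepresentation ρ) :
    Representation k G (W ⧸ p.toSubmodule) :=
  ρ.quotient p.toSubmodule p.le_comap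

end Monoid

section Group

variable [Group G] {ρ : Representation k G W}

theorem IsIrreducible.map_commutatorElement_eq_one [ρ.IsIrreducible] (i : ℕ) :
    ∀ {x g : G}, IsUnipotent (ρ x) → ⁅x, g⁆ ∈ Subgroup.upperCentralSeries G i → ρ ⁅x, g⁆ = 1 := by
  induction i with
  | zero =>
    intro x g _ h
    rw [Subgroup.upperCentralSeries_zero, Subgroup.mem_bot] at h
    rw [h, map_one]
  | succ i ih =>
    intro x g hx hmem
    rw [Subgroup.mem_upperCentralSeries_succ_iff] at hmem
    have hcomm : Commute (ρ x) (ρ ⁅x, g⁆) := ρ.commute_of_map_commutatorElement_eq_one <|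
      ih hx (by rw [← commutatorElement_inv]; exact inv_mem (hmem x))
    have hunip := hx.map_commutatorElement ρ g hcomm
    exact eq_one_of_isUnipotent hunip fun h =>
      ρ.commute_of_map_commutatorElement_eq_one (ih hunip (hmem h))

theorem IsIrreducible.map_eq_one_of_isUnipotent [Group.IsNilpotent G] [ρ.IsIrreducible] {x : G}
    (hx : IsUnipotent (ρ x)) : ρ x = 1 := by
  obtain ⟨c, hc⟩ := Group.IsNilpotent.nilpotent G
  exact eq_one_of_isUnipotent hx fun g => ρ.commute_of_map_commutatorElement_eq_one <|
    map_commutatorElement_eq_one c hx (hc ▸ Subgroup.mem_top _)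

theorem IsIrreducible.eq_one_of_closure_eq_top [Group.IsNilpotent G] [ρ.IsIrreducible] {S : Set G}
    (hS : Subgroup.closure S = ⊤) (hρ : ∀ s ∈ S, IsUnipotent (ρ s)) (g : G) : ρ g = 1 := by
  have : Subgroup.closure S ≤ ρ.ker :=
    (Subgroup.closure_le _).2 fun s hs => map_eq_one_of_isUnipotent (hρ s hs)
  exact (hS ▸ this) (Subgroup.mem_top g)

theorem isUnipotent_of_closure_eq_top [Group.IsNilpotent G] [FiniteDimensional k W] {S : Set G}
    (hS : Subgroup.closure S = ⊤) (ρ : Representation k G W) (hρ : ∀ s ∈ S, IsUnipotent (ρ s))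
    (g : G) : IsUnipotent (ρ g) := by
  induction hn : Module.finrank k W using Nat.strong_induction_on generalizing W with
  | _ n ih =>
  rcases subsingleton_or_nontrivial W with hW | hW
  · exact ⟨1, Subsingleton.elim _ _⟩
  by_cases hirr : ρ.IsIrreducible
  · rw [hirr.eq_one_of_closure_eq_top hS hρ g]
    exact IsUnipotent.one
  obtain ⟨p, hp_bot, hp_top⟩ := exists_ne_bot_ne_top_of_not_isIrreducible hirr
  have hsub : Module.finrank k p.toSubmodule < n :=
    hn ▸ Submodule.finrank_lt fun h => hp_top (Subrepresentation.ext h)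
  have hquot : Module.finrank k (W ⧸ p.toSubmodule) < n := by
    have := p.toSubmodule.finrank_quotient_add_finrank
    have : Module.finrank k p.toSubmodule ≠ 0 := fun h =>
      hp_bot (Subrepresentation.ext (Submodule.finrank_eq_zero.1 h))
    omega
  exact Module.End.isUnipotent_of_restrict_of_mapQ (p.le_comap g)
    (ih _ hsub p.toRepresentation (fun s hs => (hρ s hs).restrict (p.le_comap s)) rfl)
    (ih _ hquot p.quotient (fun s hs => (hρ s hs).mapQ (p.le_comap s)) rfl)

end Group

end Representation

section Affine

variable {V : Type*} [NormedAddCommGroup V] [NormedSpace ℝ V]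

theorem affToLin_apply (g : V ≃ᵃ[ℝ] V) (x : V × ℝ) :
    affToLin g x = (g.linear x.1 + x.2 • g 0, x.2) := rfl

def affToLinHom : (V ≃ᵃ[ℝ] V) →* Module.End ℝ (V × ℝ) where
  toFun := affToLin
  map_one' := by ext <;> simp [affToLin_apply, AffineEquiv.one_def]
  map_mul' g h := LinearMap.ext fun ⟨v, t⟩ => by
    have hlinear : (g * h).linear v = g.linear (h.linear v) := rfl
    have htransl : (g * h) 0 = g.linear (h 0) + g 0 :=
      congrFun (AffineMap.decomp (g : V →ᵃ[ℝ] V)) (h 0)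
    simp only [Module.End.mul_apply, affToLin_apply, hlinear, htransl, map_add, map_smul, smul_add,
      add_assoc]

-- `IsUnipotentAff g` unfolds to `IsUnipotent (affToLinHom g)`.
theorem isUnipotentAff_of_closure_eq_top [FiniteDimensional ℝ V] {Γ : Type*} [Group Γ]
    [Group.IsNilpotent Γ] {S : Set Γ} (hS : Subgroup.closure S = ⊤) (ρ : Γ →* (V ≃ᵃ[ℝ] V))
    (hρ : ∀ s ∈ S, IsUnipotentAff (ρ s)) (γ : Γ) : IsUnipotentAff (ρ γ) :=
  Representation.isUnipotent_of_closure_eq_top hS (affToLinHom.comp ρ) hρ γ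

end Affine

/-- If `Γ` is nilpotent, generated by `S`, and `ρ : Γ → Aff(V)` is a homomorphism which is
unipotent on `S`, then `ρ` is unipotent on all of `Γ`.  Consequently, for any finite
generating set `γ_1, …, γ_m` of `Γ`, the set of unipotent homomorphisms
`Hom_u(Γ, Aff(V))` is cut out inside `Hom(Γ, Aff(V)) ⊆ Aff(V)^m` by the (polynomial,
with rational coefficients in the matrix entries) equations
`(ρ(γ_i) − id)^(dim V + 1) = 0` in `GL(V ⊕ ℝ)`. -/
theorem unipotent_on_generators_of_nilpotent
    {V : Type*} [NormedAddCommGroup V] [NormedSpace ℝ V] [FiniteDimensional ℝ V]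
    {Γ : Type*} [Group Γ] [Group.IsNilpotent Γ]
    (S : Set Γ) (hS : Subgroup.closure S = ⊤)
    (ρ : Γ →* (V ≃ᵃ[ℝ] V)) (hρ : ∀ s ∈ S, IsUnipotentAff (ρ s)) :
    (∀ γ : Γ, IsUnipotentAff (ρ γ)) ∧
    ∀ (m : ℕ) (γs : Fin m → Γ), Subgroup.closure (Set.range γs) = ⊤ →
      {σ : Γ →* (V ≃ᵃ[ℝ] V) | ∀ γ : Γ, IsUnipotentAff (σ γ)} =
        {σ : Γ →* (V ≃ᵃ[ℝ] V) |
          ∀ i : Fin m, (affToLin (σ (γs i)) - 1) ^ (Module.finrank ℝ V + 1) = 0} := by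
  refine ⟨isUnipotentAff_of_closure_eq_top hS ρ hρ, fun m γs hγs => Set.ext fun σ =>
    ⟨fun hσ i => ?_, fun hσ => isUnipotentAff_of_closure_eq_top hγs σ ?_⟩⟩
  · have := (hσ (γs i)).pow_finrank_eq_zero
    rwa [Module.finrank_prod, Module.finrank_self] at this
  · exact Set.forall_mem_range.2 fun i => ⟨_, hσ i⟩

end
end

section
/- Let Δ be a group containing ℤ^n as a normal subgroup of finite index such that the centralizer of ℤ^n in Δ equals ℤ^n (a finite effective extension of ℤ^n). Then there is an injective homomorphism from Δ into the group E(n) of Euclidean isometries of ℝ^n whose image is properly discontinuous and has compact orbit space; that is, Δ is isomorphic to a Euclidean crystallographic group. -/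
/-!
Conjugation lets the finite group `Δ ⧸ Z` act on `Z ≅ ℤ^n` by integral matrices. Averaging the
standard inner product over this finite group gives an invariant one (Weyl's trick), so after a
change of basis `y` the action on `ℝ^n` is orthogonal. Averaging the `Z`-part of `δ * q.out` over
the cosets `q` produces a cocycle that extends the inclusion `Z → ℝ^n`; this kills the extension
class, so `Δ` acts on `ℝ^n` by isometries with `Z` acting as translations by the lattice
`y ℤ^n`. Having a lattice of translations of finite index, the image is properly discontinuous
and cocompact; it is faithful because an element acting trivially centralises `Z`, hence lies
in `Z`, which acts by nonzero translations.
-/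

noncomputable section

section UnitaryTrick

open scoped MatrixOrder ComplexOrder
open Matrix

variable {ι 𝕜 G : Type*} [Fintype ι] [DecidableEq ι] [RCLike 𝕜] [Group G] [Finite G]

theorem Matrix.exists_conj_mem_unitaryGroup (ρ : G →* Matrix ι ι 𝕜) :
    ∃ y : (Matrix ι ι 𝕜)ˣ, ∀ g, (y * ρ g * y⁻¹.val : Matrix ι ι 𝕜) ∈ unitaryGroup ι 𝕜 := by
  have := Fintype.ofFinite G
  set S := ∑ g, star (ρ g) * ρ g with hS_def
  have hS : S.PosDef := by
    classical
    rw [hS_def, ← Finset.add_sum_erase _ _ (Finset.mem_univ 1), map_one, star_one, one_mul]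
    exact PosDef.one.add_posSemidef
      (posSemidef_sum _ fun g _ => posSemidef_conjTranspose_mul_self (ρ g))
  have hS_inv : ∀ h, star (ρ h) * S * ρ h = S := fun h => by
    simp only [hS_def, Finset.mul_sum, Finset.sum_mul]
    refine Fintype.sum_equiv (Equiv.mulRight h) _ _ fun g => ?_
    simp only [Equiv.coe_mulRight, map_mul, star_mul, mul_assoc]
  obtain ⟨y, hy, hSy⟩ :=
    CStarAlgebra.isStrictlyPositive_iff_eq_star_mul_self.mp hS.isStrictlyPositive
  lift y to (Matrix ι ι 𝕜)ˣ using hy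
  refine ⟨y, fun g => ?_⟩
  rw [mem_unitaryGroup_iff']
  calc star (y * ρ g * y⁻¹.val) * (y * ρ g * y⁻¹.val)
      = star y⁻¹.val * (star (ρ g) * (star y.val * y) * ρ g) * y⁻¹.val := by
        simp only [star_mul, mul_assoc]
    _ = star (y * y⁻¹.val) * (y * y⁻¹.val) := by
        rw [← hSy, hS_inv, hSy, star_mul]
        simp only [mul_assoc]
    _ = 1 := by simp

end UnitaryTrick

theorem Subgroup.le_centralizer_of_mulEquiv {G H : Type*} [Group G] [CommGroup H]
    {K : Subgroup G} (e : K ≃* H) : K ≤ centralizer (K : Set G) :=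
  le_centralizer_iff_isMulCommutative.2 <| isMulCommutative_iff.2 fun a b =>
    e.injective (by rw [map_mul, map_mul, mul_comm])

section AffineExtension

section Injectivity

variable {Δ : Type*} [Group Δ] {Z : Subgroup Δ} {k V : Type*} [Ring k] [AddCommGroup V]
  [Module k V]

theorem injective_of_affineEquiv_extension {ρ : Δ →* (V ≃ᵃ[k] V)} {A : Δ → (V ≃ₗ[k] V)}
    {t : Z → V} (hρA : ∀ δ, (ρ δ).linear = A δ)
    (hρt : ∀ z : Z, ρ z = AffineEquiv.constVAdd k V (t z)) (hA : ∀ δ, A δ = 1 → δ ∈ Z)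
    (ht : ∀ z, t z = 0 → z = 1) : Function.Injective ρ := by
  refine (injective_iff_map_eq_one ρ).2 fun δ hδ => ?_
  have hδZ : δ ∈ Z := hA δ (by rw [← hρA, hδ]; rfl)
  have h0 := congrArg (fun f : V ≃ᵃ[k] V => f 0) ((hρt ⟨δ, hδZ⟩).symm.trans hδ)
  simp only [AffineEquiv.constVAdd_apply, vadd_eq_add, add_zero, AffineEquiv.coe_one,
    id_eq] at h0
  simpa using congrArg Subtype.val (ht _ h0)

end Injectivity

variable {Δ : Type*} [Group Δ] (Z : Subgroup Δ) [Z.Normal]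

def outFactor (δ : Δ) (q : Δ ⧸ Z) : Z :=
  ⟨δ * q.out * (↑δ * q : Δ ⧸ Z).out⁻¹, by
    rw [← QuotientGroup.eq_one_iff, QuotientGroup.mk_mul, QuotientGroup.mk_mul,
      QuotientGroup.mk_inv, QuotientGroup.out_eq', QuotientGroup.out_eq', mul_inv_cancel]⟩

theorem outFactor_mul (δ₁ δ₂ : Δ) (q : Δ ⧸ Z) :
    outFactor Z (δ₁ * δ₂) q =
      MulAut.conjNormal δ₁ (outFactor Z δ₂ q) * outFactor Z δ₁ (δ₂ * q) := by
  ext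
  simp only [outFactor, MulAut.conjNormal_apply, Subgroup.coe_mul, QuotientGroup.mk_mul,
    mul_assoc]
  group

theorem outFactor_of_mem {z : Δ} (hz : z ∈ Z) (q : Δ ⧸ Z) : outFactor Z z q = ⟨z, hz⟩ := by
  ext
  simp [outFactor, (QuotientGroup.eq_one_iff z).2 hz]

variable (k : Type*) {V : Type*} [DivisionRing k] [AddCommGroup V] [Module k V]

def averagedTranslation [Fintype (Δ ⧸ Z)] (t : Z → V) (δ : Δ) : V :=
  (Fintype.card (Δ ⧸ Z) : k)⁻¹ • ∑ q, t (outFactor Z δ q)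

section Averaging

variable [Fintype (Δ ⧸ Z)] {t : Z → V}

theorem averagedTranslation_mul (ht : ∀ z w, t (z * w) = t z + t w) (A : Δ → V ≃ₗ[k] V)
    (htA : ∀ δ z, t (MulAut.conjNormal δ z) = A δ (t z)) (δ₁ δ₂ : Δ) :
    averagedTranslation Z k t (δ₁ * δ₂) =
      A δ₁ (averagedTranslation Z k t δ₂) + averagedTranslation Z k t δ₁ := by
  simp only [averagedTranslation, outFactor_mul, ht, htA, Finset.sum_add_distrib, map_smul,
    map_sum, smul_add]
  congr 2
  exact Fintype.sum_equiv (Equiv.mulLeft (δ₂ : Δ ⧸ Z)) _ _ fun _ => rfl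

theorem averagedTranslation_of_mem [CharZero k] {z : Δ} (hz : z ∈ Z) :
    averagedTranslation Z k t z = t ⟨z, hz⟩ := by
  rw [averagedTranslation, Finset.sum_congr rfl fun q _ => by rw [outFactor_of_mem Z hz],
    Finset.sum_const, Finset.card_univ, ← Nat.cast_smul_eq_nsmul k, smul_smul,
    inv_mul_cancel₀ (Nat.cast_ne_zero.2 Fintype.card_ne_zero), one_smul]

end Averaging

theorem exists_affineEquiv_extension [CharZero k] [Finite (Δ ⧸ Z)] (A : Δ →* (V ≃ₗ[k] V))
    (hA : ∀ z ∈ Z, A z = 1) (t : Z → V) (ht : ∀ z w, t (z * w) = t z + t w)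
    (htA : ∀ δ z, t (MulAut.conjNormal δ z) = A δ (t z)) :
    ∃ ρ : Δ →* (V ≃ᵃ[k] V),
      (∀ δ, (ρ δ).linear = A δ) ∧ ∀ z : Z, ρ z = AffineEquiv.constVAdd k V (t z) := by
  have := Fintype.ofFinite (Δ ⧸ Z)
  have hb := averagedTranslation_mul Z k ht A htA
  refine ⟨{ toFun := fun δ => (A δ).toAffineEquiv.trans
              (AffineEquiv.constVAdd k V (averagedTranslation Z k t δ)),
            map_one' := ?_, map_mul' := ?_ }, fun δ => rfl, fun z => ?_⟩
  · have hb_one : averagedTranslation Z k t 1 = 0 := by simpa using hb 1 1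
    ext x
    simp [hb_one]
  · intro δ₁ δ₂
    ext x
    simp only [AffineEquiv.coe_mul, Function.comp_apply, AffineEquiv.trans_apply,
      AffineEquiv.constVAdd_apply, LinearEquiv.coe_toAffineEquiv, map_mul,
      LinearEquiv.mul_apply, vadd_eq_add, hb, map_add]
    abel
  · ext x
    simp [averagedTranslation_of_mem Z k z.2, hA z z.2, vadd_eq_add]

end AffineExtension

section LatticeCriterion

open Submodule Pointwise

variable {E ι : Type*} [NormedAddCommGroup E] [NormedSpace ℝ E] [FiniteDimensional ℝ E]
  [Finite ι] (b : Module.Basis ι ℝ E) {G : Subgroup (E ≃ᵃ[ℝ] E)}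

theorem properlyDiscontinuousAff_of_lattice {S : Set (E ≃ᵃ[ℝ] E)} (hS : S.Finite)
    (hcover : ∀ g ∈ G, ∃ s ∈ S, ∃ ℓ ∈ span ℤ (Set.range b),
      g = s * AffineEquiv.constVAdd ℝ E ℓ) :
    ProperlyDiscontinuousAff G := by
  intro K hK
  have hfin (s : E ≃ᵃ[ℝ] E) : ((s.symm '' K - K) ∩ span ℤ (Set.range b)).Finite :=
    ZSpan.setFinite_inter b <| isBounded_sub
      (hK.image s.symm.toAffineMap.continuous_of_finiteDimensional).isBounded hK.isBounded
  refine (hS.biUnion fun s _ =>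
    (hfin s).image fun ℓ => s * AffineEquiv.constVAdd ℝ E ℓ).subset ?_
  rintro g ⟨hg, -, ⟨x, hx, rfl⟩, hgx⟩
  obtain ⟨s, hs, ℓ, hℓ, rfl⟩ := hcover g hg
  refine Set.mem_biUnion hs
    ⟨ℓ, ⟨Set.mem_sub.2 ⟨_, Set.mem_image_of_mem _ hgx, x, hx, ?_⟩, hℓ⟩, rfl⟩
  simp [vadd_eq_add]

theorem compactSpace_orbits_of_lattice
    (hL : ∀ ℓ ∈ span ℤ (Set.range b), AffineEquiv.constVAdd ℝ E ℓ ∈ G) :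
    CompactSpace (Quotient (affOrbitSetoid G)) := by
  have := Fintype.ofFinite ι
  have hsurj :
      Quotient.mk (affOrbitSetoid G) '' closure (ZSpan.fundamentalDomain b) = Set.univ := by
    refine Set.eq_univ_of_forall fun x => Quotient.inductionOn x fun x => ?_
    refine ⟨ZSpan.fract b x, subset_closure (ZSpan.fract_mem_fundamentalDomain b x),
      Quotient.sound ⟨_, hL _ (ZSpan.floor b x).2, ?_⟩⟩
    simp [ZSpan.fract_apply, vadd_eq_add]
  exact ⟨hsurj ▸ (ZSpan.fundamentalDomain_isBounded b).isCompact_closure.image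
    continuous_quotient_mk'⟩

end LatticeCriterion

section Coordinates

open Matrix

variable {n : ℕ} {Δ : Type*} [Group Δ] {Z : Subgroup Δ} (e : Z ≃* Multiplicative (Fin n → ℤ))

def latticeCoord (z : Z) : Fin n → ℝ := fun i => ((e z).toAdd i : ℝ)

theorem latticeCoord_mul (z w : Z) :
    latticeCoord e (z * w) = latticeCoord e z + latticeCoord e w := by
  ext i
  simp [latticeCoord]

theorem latticeCoord_injective : Function.Injective (latticeCoord e) := fun _ _ h =>
  e.injective <| Multiplicative.toAdd.injective <| funext fun i =>
    Int.cast_injective (congrFun h i)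

variable [Z.Normal]

def conjLinearMap : Δ →* Module.End ℤ (Fin n → ℤ) where
  toFun δ := (AddMonoidHom.toMultiplicative.symm
    ((e.toMonoidHom.comp (MulAut.conjNormal δ).toMonoidHom).comp e.symm.toMonoidHom)).toIntLinearMap
  map_one' := by ext; simp
  map_mul' _ _ := by ext; simp

def conjMatrix : Δ →* Matrix (Fin n) (Fin n) ℝ :=
  ((Int.castRingHom ℝ).mapMatrix.toMonoidHom.comp
    (LinearMap.toMatrixAlgEquiv' (R := ℤ) (n := Fin n)).toMonoidHom).comp (conjLinearMap e)

theorem conjMatrix_mulVec_latticeCoord (δ : Δ) (z : Z) :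
    conjMatrix e δ *ᵥ latticeCoord e z = latticeCoord e (MulAut.conjNormal δ z) := by
  ext i
  calc (conjMatrix e δ *ᵥ latticeCoord e z) i
      = Int.castRingHom ℝ ((LinearMap.toMatrix' (conjLinearMap e δ) *ᵥ (e z).toAdd) i) :=
        ((Int.castRingHom ℝ).map_mulVec _ _ i).symm
    _ = latticeCoord e (MulAut.conjNormal δ z) i := by
        simp [LinearMap.toMatrix'_mulVec, conjLinearMap, latticeCoord]

theorem conjMatrix_eq_one_iff (δ : Δ) :
    conjMatrix e δ = 1 ↔ δ ∈ Subgroup.centralizer (Z : Set Δ) := by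
  refine ⟨fun h => Subgroup.mem_centralizer_iff.2 fun g hg => ?_, fun h => ?_⟩
  · have hfix := conjMatrix_mulVec_latticeCoord e δ ⟨g, hg⟩
    rw [h, one_mulVec] at hfix
    have hg' : g = δ * g * δ⁻¹ := congrArg Subtype.val (latticeCoord_injective e hfix)
    conv_lhs => rw [hg']
    group
  · have hconj : MulAut.conjNormal (H := Z) δ = 1 := by
      ext z
      simp [MulAut.conjNormal_apply, ← Subgroup.mem_centralizer_iff.1 h z z.2]
    have : conjLinearMap e δ = 1 := LinearMap.ext fun v => by simp [conjLinearMap, hconj]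
    simp [conjMatrix, this]

theorem exists_conj_conjMatrix_mem_orthogonalGroup [Finite (Δ ⧸ Z)] :
    ∃ y : (Matrix (Fin n) (Fin n) ℝ)ˣ,
      ∀ δ, y * conjMatrix e δ * y⁻¹.val ∈ orthogonalGroup (Fin n) ℝ := by
  have hZ : Z ≤ (conjMatrix e).ker := fun z hz =>
    (conjMatrix_eq_one_iff e z).2 (Subgroup.le_centralizer_of_mulEquiv e hz)
  obtain ⟨y, hy⟩ := exists_conj_mem_unitaryGroup (QuotientGroup.lift Z (conjMatrix e) hZ)
  exact ⟨y, fun δ => hy δ⟩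

end Coordinates

section EuclideanRealization

open Matrix Submodule

variable {n : ℕ}

def euclideanLinearEquiv :
    (Matrix (Fin n) (Fin n) ℝ)ˣ →* (EuclideanSpace ℝ (Fin n) ≃ₗ[ℝ] EuclideanSpace ℝ (Fin n)) :=
  (LinearMap.GeneralLinearGroup.generalLinearEquiv ℝ _).toMonoidHom.comp
    (Units.map (ContinuousLinearMap.toLinearMapRingHom.comp
      (toEuclideanCLM (n := Fin n) (𝕜 := ℝ)).toRingEquiv.toRingHom).toMonoidHom)

theorem euclideanLinearEquiv_apply (y : (Matrix (Fin n) (Fin n) ℝ)ˣ)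
    (x : EuclideanSpace ℝ (Fin n)) :
    euclideanLinearEquiv y x = toEuclideanCLM (n := Fin n) (𝕜 := ℝ) y x := rfl

variable {Δ : Type*} [Group Δ] {Z : Subgroup Δ} (e : Z ≃* Multiplicative (Fin n → ℤ))
  (y : (Matrix (Fin n) (Fin n) ℝ)ˣ)

def latticeVector (z : Z) : EuclideanSpace ℝ (Fin n) :=
  euclideanLinearEquiv y (WithLp.toLp 2 (latticeCoord e z))

theorem latticeVector_mul (z w : Z) :
    latticeVector e y (z * w) = latticeVector e y z + latticeVector e y w := by
  simp [latticeVector, latticeCoord_mul]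

theorem latticeVector_eq_zero {z : Z} (h : latticeVector e y z = 0) : z = 1 := by
  apply latticeCoord_injective e
  rw [show latticeCoord e 1 = 0 by ext; simp [latticeCoord]]
  simpa [latticeVector] using h

def latticeBasis : Module.Basis (Fin n) ℝ (EuclideanSpace ℝ (Fin n)) :=
  (EuclideanSpace.basisFun (Fin n) ℝ).toBasis.map (euclideanLinearEquiv y)

theorem mem_span_latticeBasis {ℓ : EuclideanSpace ℝ (Fin n)} :
    ℓ ∈ span ℤ (Set.range (latticeBasis y)) ↔ ∃ z, latticeVector e y z = ℓ := by
  simp only [Module.Basis.mem_span_iff_repr_mem, latticeBasis, Module.Basis.map_repr,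
    LinearEquiv.trans_apply, algebraMap_int_eq, Set.mem_range, eq_intCast]
  constructor
  · intro h
    choose v hv using h
    refine ⟨e.symm (.ofAdd v), ?_⟩
    rw [latticeVector, ← LinearEquiv.eq_symm_apply]
    ext i
    simp [latticeCoord, hv]
  · rintro ⟨z, rfl⟩ i
    exact ⟨(e z).toAdd i, by simp [latticeVector, latticeCoord]⟩

variable [Z.Normal]

def conjRep : Δ →* (EuclideanSpace ℝ (Fin n) ≃ₗ[ℝ] EuclideanSpace ℝ (Fin n)) :=
  euclideanLinearEquiv.comp ((MulAut.conj y).toMonoidHom.comp (conjMatrix e).toHomUnits)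

theorem conjRep_apply (δ : Δ) (x : EuclideanSpace ℝ (Fin n)) :
    conjRep e y δ x = toEuclideanCLM (n := Fin n) (𝕜 := ℝ) (y * conjMatrix e δ * y⁻¹.val) x :=
  rfl

theorem conjRep_eq_one_iff (δ : Δ) :
    conjRep e y δ = 1 ↔ δ ∈ Subgroup.centralizer (Z : Set Δ) := by
  rw [← conjMatrix_eq_one_iff e]
  constructor
  · intro h
    have hU : toEuclideanCLM (n := Fin n) (𝕜 := ℝ) (y * conjMatrix e δ * y⁻¹.val) = 1 := by
      ext1 x
      exact DFunLike.congr_fun h x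
    have := Units.mul_inv_eq_one.1 (toEuclideanCLM.injective (hU.trans (map_one _).symm))
    exact (Units.mul_right_inj y).1 (this.trans (mul_one _).symm)
  · intro h
    have : (conjMatrix e).toHomUnits δ = 1 := Units.ext h
    simp [conjRep, this]

theorem norm_conjRep_apply
    (hy : ∀ δ, y * conjMatrix e δ * y⁻¹.val ∈ orthogonalGroup (Fin n) ℝ)
    (δ : Δ) (x : EuclideanSpace ℝ (Fin n)) : ‖conjRep e y δ x‖ = ‖x‖ := by
  have hU : toEuclideanCLM (n := Fin n) (𝕜 := ℝ) (y * conjMatrix e δ * y⁻¹.val) ∈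
      unitary (EuclideanSpace ℝ (Fin n) →L[ℝ] EuclideanSpace ℝ (Fin n)) :=
    Unitary.map_mem _ (hy δ)
  exact ContinuousLinearMap.norm_map_of_mem_unitary hU x

theorem latticeVector_conjNormal (δ : Δ) (z : Z) :
    latticeVector e y (MulAut.conjNormal δ z) = conjRep e y δ (latticeVector e y z) := by
  simp [latticeVector, conjRep_apply, euclideanLinearEquiv_apply,
    ← conjMatrix_mulVec_latticeCoord, mul_assoc]

end EuclideanRealization

/-- **Burckhardt–Zassenhaus.**  Every finite effective extension `Δ` of `ℤ^n` is
isomorphic to a Euclidean crystallographic group: there is an injective homomorphism of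
`Δ` into the affine group of `ℝ^n` whose image consists of isometries, is properly
discontinuous and has compact orbit space. -/
theorem finite_effective_extension_of_zn_is_euclidean_crystallographic
    (n : ℕ) {Δ : Type*} [Group Δ] (Z : Subgroup Δ) (hnorm : Z.Normal)
    (hfi : Z.FiniteIndex)
    (hiso : Nonempty (↥Z ≃* Multiplicative (Fin n → ℤ)))
    (hc : Subgroup.centralizer (Z : Set Δ) = Z) :
    ∃ ρ : Δ →* (EuclideanSpace ℝ (Fin n) ≃ᵃ[ℝ] EuclideanSpace ℝ (Fin n)),
      Function.Injective ρ ∧ (∀ δ : Δ, Isometry (ρ δ)) ∧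
        IsCrystallographic ρ.range := by
  obtain ⟨e⟩ := hiso
  obtain ⟨y, hy⟩ := exists_conj_conjMatrix_mem_orthogonalGroup e
  obtain ⟨ρ, hρA, hρt⟩ := exists_affineEquiv_extension Z ℝ (conjRep e y)
    (fun z hz => (conjRep_eq_one_iff e y z).2 (Subgroup.le_centralizer_of_mulEquiv e hz))
    (latticeVector e y) (latticeVector_mul e y) (latticeVector_conjNormal e y)
  refine ⟨ρ, injective_of_affineEquiv_extension hρA hρt
      (fun δ hδ => hc ▸ (conjRep_eq_one_iff e y δ).1 hδ) (fun _ => latticeVector_eq_zero e y),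
    fun δ => (AffineIsometryEquiv.mk (ρ δ) fun x => by
      rw [hρA]; exact norm_conjRep_apply e y hy δ x).isometry, ?_, ?_⟩
  · refine properlyDiscontinuousAff_of_lattice (latticeBasis y)
      (Set.finite_range fun q : Δ ⧸ Z => ρ q.out) ?_
    rintro _ ⟨δ, rfl⟩
    obtain ⟨z, hz⟩ := QuotientGroup.mk_out_eq_mul Z δ
    refine ⟨_, Set.mem_range_self (δ : Δ ⧸ Z), _, (mem_span_latticeBasis e y).2 ⟨z⁻¹, rfl⟩, ?_⟩
    rw [← hρt, ← map_mul, hz]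
    simp
  · exact compactSpace_orbits_of_lattice (latticeBasis y) fun ℓ hℓ => by
      obtain ⟨z, rfl⟩ := (mem_span_latticeBasis e y).1 hℓ
      exact ⟨z, hρt z⟩

end
end

section
/- Let 𝔲 be a finite-dimensional real nilpotent Lie algebra of nilpotency class at most 3. Then there exist a Lie algebra homomorphism φ : 𝔲 → gl(𝔲) with every φ_X nilpotent and a bijective linear map D : 𝔲 → 𝔲 satisfying D[X,Y] = φ_X(DY) − φ_Y(DX) for all X, Y ∈ 𝔲; that is, 𝔲 admits an étale affine representation on itself. -/
/-!
Take `D = id`: then `X · Y := φ_X Y` must be a left-symmetric product whose commutator is the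
bracket and whose left multiplications are nilpotent. In class at most 3 the derived algebra
`S = [𝔲, 𝔲]` is abelian and `[S, 𝔲]` is central. With `T` a linear projection onto `S`, the
product `X · Y = ½[X,Y] - ⅙([TX,Y] + [TY,X])` takes values in `S` and acts on `S` as `⅔ ad X`,
so `X · (Y · Z) = ⅓[X,[Y,Z]]`. The Jacobi identity then gives `[L_X, L_Y] = L_[X,Y]`, and
`L_X³ = (2/9) (ad X)³ = 0`.
-/

attribute [local instance 100] LieRing.ofAssociativeRing

theorem Submodule.exists_isProj {K V : Type*} [DivisionRing K] [AddCommGroup V] [Module K V]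
    (p : Submodule K V) : ∃ f : V →ₗ[K] V, LinearMap.IsProj p f := by
  obtain ⟨g, hg⟩ := p.subtype.exists_leftInverse_of_injective p.ker_subtype
  exact ⟨p.subtype ∘ₗ g, fun x => (g x).2,
    fun x hx => congrArg Subtype.val (LinearMap.congr_fun hg ⟨x, hx⟩)⟩

section ClassThree

variable {R L : Type*} [CommRing R] [LieRing L] [LieAlgebra R L]

theorem lie_lie_eq_zero_of_mem_derivedSeries_one (h3 : ∀ X Y Z W : L, ⁅⁅⁅X, Y⁆, Z⁆, W⁆ = 0)
    {s : L} (hs : s ∈ LieAlgebra.derivedSeries R L 1) (u w : L) : ⁅⁅s, u⁆, w⁆ = 0 := by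
  replace hs := (LieAlgebra.coe_derivedSeries_one_eq R L).le hs
  induction hs using Submodule.span_induction with
  | mem _ h => obtain ⟨x, y, rfl⟩ := h; exact h3 x y u w
  | zero => simp
  | add a b _ _ ha hb => rw [add_lie, add_lie, ha, hb, add_zero]
  | smul r a _ ha => rw [smul_lie, smul_lie, ha, smul_zero]

theorem lie_lie_eq_zero_of_mem_derivedSeries_one' (h3 : ∀ X Y Z W : L, ⁅⁅⁅X, Y⁆, Z⁆, W⁆ = 0)
    {s : L} (hs : s ∈ LieAlgebra.derivedSeries R L 1) (u w : L) : ⁅w, ⁅s, u⁆⁆ = 0 := by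
  rw [← lie_skew, lie_lie_eq_zero_of_mem_derivedSeries_one h3 hs, neg_zero]

theorem lie_eq_zero_of_mem_derivedSeries_one (h3 : ∀ X Y Z W : L, ⁅⁅⁅X, Y⁆, Z⁆, W⁆ = 0)
    {s t : L} (hs : s ∈ LieAlgebra.derivedSeries R L 1) (ht : t ∈ LieAlgebra.derivedSeries R L 1) :
    ⁅s, t⁆ = 0 := by
  replace ht := (LieAlgebra.coe_derivedSeries_one_eq R L).le ht
  induction ht using Submodule.span_induction with
  | mem _ h =>
    obtain ⟨x, y, rfl⟩ := h
    rw [leibniz_lie, lie_lie_eq_zero_of_mem_derivedSeries_one h3 hs,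
      lie_lie_eq_zero_of_mem_derivedSeries_one' h3 hs, add_zero]
  | zero => simp
  | add a b _ _ ha hb => rw [lie_add, ha, hb, add_zero]
  | smul r a _ ha => rw [lie_smul, ha, smul_zero]

theorem lie_mem_derivedSeries_one (x y : L) : ⁅x, y⁆ ∈ LieAlgebra.derivedSeries R L 1 :=
  LieSubmodule.lie_mem_lie (LieSubmodule.mem_top x) (LieSubmodule.mem_top y)

end ClassThree

section LeftSymmetric

variable {K L : Type*} [Field K] [LieRing L] [LieAlgebra K L]

def leftSymmetricProduct (T : L →ₗ[K] L) : L →ₗ[K] L →ₗ[K] L :=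
  LinearMap.mk₂ K (fun X Y => (2⁻¹ : K) • ⁅X, Y⁆ - (6⁻¹ : K) • (⁅T X, Y⁆ + ⁅T Y, X⁆))
    (by intros; simp only [add_lie, lie_add, map_add]; module)
    (by intros; simp only [smul_lie, lie_smul, map_smul]; module)
    (by intros; simp only [add_lie, lie_add, map_add]; module)
    (by intros; simp only [smul_lie, lie_smul, map_smul]; module)

theorem leftSymmetricProduct_apply (T : L →ₗ[K] L) (X Y : L) :
    leftSymmetricProduct T X Y = (2⁻¹ : K) • ⁅X, Y⁆ - (6⁻¹ : K) • (⁅T X, Y⁆ + ⁅T Y, X⁆) :=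
  rfl

variable {T : L →ₗ[K] L}

theorem leftSymmetricProduct_mem_derivedSeries_one (X Y : L) :
    leftSymmetricProduct T X Y ∈ LieAlgebra.derivedSeries K L 1 := by
  rw [leftSymmetricProduct_apply]
  exact sub_mem (SMulMemClass.smul_mem _ (lie_mem_derivedSeries_one X Y))
    (SMulMemClass.smul_mem _ (add_mem (lie_mem_derivedSeries_one _ Y)
      (lie_mem_derivedSeries_one _ X)))

variable [CharZero K]

theorem leftSymmetricProduct_sub_swap (X Y : L) :
    leftSymmetricProduct T X Y - leftSymmetricProduct T Y X = ⁅X, Y⁆ := by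
  rw [leftSymmetricProduct_apply, leftSymmetricProduct_apply, ← lie_skew X Y]
  module

theorem leftSymmetricProduct_of_mem_derivedSeries_one
    (h3 : ∀ X Y Z W : L, ⁅⁅⁅X, Y⁆, Z⁆, W⁆ = 0)
    (hT : LinearMap.IsProj (LieAlgebra.derivedSeries K L 1 : Submodule K L) T) (X : L) {s : L}
    (hs : s ∈ LieAlgebra.derivedSeries K L 1) :
    leftSymmetricProduct T X s = (2 / 3 : K) • ⁅X, s⁆ := by
  rw [leftSymmetricProduct_apply, lie_eq_zero_of_mem_derivedSeries_one h3 (hT.map_mem X) hs,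
    hT.map_id s hs, ← lie_skew X s]
  module

theorem leftSymmetricProduct_leftSymmetricProduct (h3 : ∀ X Y Z W : L, ⁅⁅⁅X, Y⁆, Z⁆, W⁆ = 0)
    (hT : LinearMap.IsProj (LieAlgebra.derivedSeries K L 1 : Submodule K L) T) (X Y Z : L) :
    leftSymmetricProduct T X (leftSymmetricProduct T Y Z) = (3⁻¹ : K) • ⁅X, ⁅Y, Z⁆⁆ := by
  rw [leftSymmetricProduct_of_mem_derivedSeries_one h3 hT X
      (leftSymmetricProduct_mem_derivedSeries_one Y Z), leftSymmetricProduct_apply,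
    lie_sub, lie_smul, lie_smul, lie_add,
    lie_lie_eq_zero_of_mem_derivedSeries_one' h3 (hT.map_mem Y),
    lie_lie_eq_zero_of_mem_derivedSeries_one' h3 (hT.map_mem Z)]
  module

theorem leftSymmetricProduct_lie (h3 : ∀ X Y Z W : L, ⁅⁅⁅X, Y⁆, Z⁆, W⁆ = 0)
    (hT : LinearMap.IsProj (LieAlgebra.derivedSeries K L 1 : Submodule K L) T) (X Y : L) :
    leftSymmetricProduct T ⁅X, Y⁆ = ⁅leftSymmetricProduct T X, leftSymmetricProduct T Y⁆ := by
  ext Z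
  have hXY := lie_mem_derivedSeries_one (R := K) X Y
  rw [Ring.lie_def, LinearMap.sub_apply, Module.End.mul_apply, Module.End.mul_apply,
    leftSymmetricProduct_leftSymmetricProduct h3 hT,
    leftSymmetricProduct_leftSymmetricProduct h3 hT, leftSymmetricProduct_apply, hT.map_id _ hXY,
    lie_eq_zero_of_mem_derivedSeries_one h3 (hT.map_mem Z) hXY, leibniz_lie X Y Z]
  module

theorem isNilpotent_leftSymmetricProduct (h3 : ∀ X Y Z W : L, ⁅⁅⁅X, Y⁆, Z⁆, W⁆ = 0)
    (hT : LinearMap.IsProj (LieAlgebra.derivedSeries K L 1 : Submodule K L) T) (X : L) :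
    IsNilpotent (leftSymmetricProduct T X) := by
  refine ⟨3, LinearMap.ext fun Z => ?_⟩
  have hXXZ : ⁅X, ⁅X, ⁅X, Z⁆⁆⁆ = 0 := by
    rw [← lie_skew X ⁅X, Z⁆, lie_neg, lie_lie_eq_zero_of_mem_derivedSeries_one' h3
      (lie_mem_derivedSeries_one (R := K) X Z), neg_zero]
  rw [pow_succ', Module.End.mul_apply, sq, Module.End.mul_apply,
    leftSymmetricProduct_leftSymmetricProduct h3 hT X X Z, map_smul,
    leftSymmetricProduct_of_mem_derivedSeries_one h3 hT X
      (lie_mem_derivedSeries_one (R := K) X _), hXXZ]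
  simp

end LeftSymmetric

theorem threeStep_nilpotent_lie_algebra_admits_etale_affine_representation_general
    {𝔲 : Type*} [LieRing 𝔲] [LieAlgebra ℝ 𝔲]
    (h3 : ∀ X Y Z W : 𝔲, ⁅⁅⁅X, Y⁆, Z⁆, W⁆ = 0) :
    ∃ (φ : 𝔲 →ₗ⁅ℝ⁆ Module.End ℝ 𝔲) (D : 𝔲 →ₗ[ℝ] 𝔲),
      (∀ X : 𝔲, IsNilpotent (φ X)) ∧
      Function.Bijective D ∧
      (∀ X Y : 𝔲, D ⁅X, Y⁆ = φ X (D Y) - φ Y (D X)) := by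
  obtain ⟨T, hT⟩ := Submodule.exists_isProj (LieAlgebra.derivedSeries ℝ 𝔲 1 : Submodule ℝ 𝔲)
  exact ⟨⟨leftSymmetricProduct T, fun {X Y} => leftSymmetricProduct_lie h3 hT X Y⟩, LinearMap.id,
    isNilpotent_leftSymmetricProduct h3 hT, Function.bijective_id,
    fun X Y => (leftSymmetricProduct_sub_swap X Y).symm⟩

/-- **Scheuneman.**  Every finite-dimensional real nilpotent Lie algebra `𝔲` of
nilpotency class at most 3 admits an étale affine representation on itself: there are a
Lie algebra homomorphism `φ : 𝔲 → gl(𝔲)` with nilpotent values and a bijective linear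
map `D : 𝔲 → 𝔲` which is a derivation for `φ`. -/
theorem threeStep_nilpotent_lie_algebra_admits_etale_affine_representation
    {𝔲 : Type*} [LieRing 𝔲] [LieAlgebra ℝ 𝔲] [Module.Finite ℝ 𝔲]
    (h3 : ∀ X Y Z W : 𝔲, ⁅⁅⁅X, Y⁆, Z⁆, W⁆ = 0) :
    ∃ (φ : 𝔲 →ₗ⁅ℝ⁆ Module.End ℝ 𝔲) (D : 𝔲 →ₗ[ℝ] 𝔲),
      (∀ X : 𝔲, IsNilpotent (φ X)) ∧
      Function.Bijective D ∧
      (∀ X Y : 𝔲, D ⁅X, Y⁆ = φ X (D Y) - φ Y (D X)) :=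
  threeStep_nilpotent_lie_algebra_admits_etale_affine_representation_general h3
end
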